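/- Let (x*,u*) be an admissible process for the linear-convex problem without state constraints: minimize l(x(a),x(b)) + ∫_a^b L(t,x(t),u(t)) dt subject to ẋ(t) = A(t)x(t) + B(t)u(t) a.e., u(t) ∈ U(t) a.e., and (x(a),x(b)) ∈ E. Suppose there exists an absolutely continuous p : [a,b] → ℝⁿ such that: (i) for almost every t ∈ [a,b], for all x ∈ ℝⁿ and all u ∈ U(t), ⟨p(t), A(t)x + B(t)u⟩ − L(t,x,u) ≤ ⟨p(t), A(t)x*(t) + B(t)u*(t)⟩ − L(t,x*(t),u*(t)) + ⟨−ṗ(t), x − x*(t)⟩; (ii) for all (x_a,x_b) ∈ E, l(x_a,x_b) − l(x*(a),x*(b)) ≥ ⟨p(a), x_a − x*(a)⟩ − ⟨p(b), x_b − x*(b)⟩. Then (x*,u*) minimizes the cost over all admissible processes. -/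

import Mathlib

open MeasureTheory Set Filter
open scoped InnerProductSpace

noncomputable section

/-- Shorthand for Euclidean space `ℝⁿ`. -/
abbrev Vec (n : ℕ) := EuclideanSpace ℝ (Fin n)

/-- An admissible process for the linear(-convex) optimal control problem without state
constraints on `[a,b]`: `x` is absolutely continuous (encoded via an integrable derivative
`x'` and the integral representation), `ẋ(t) = A(t)x(t) + B(t)u(t)` a.e., `u` is measurable
with `u(t) ∈ U(t)` a.e., the endpoints satisfy `(x(a), x(b)) ∈ E`, and the running cost
`t ↦ L(t,x(t),u(t))` is integrable. -/
def AdmissibleS {n k : ℕ} (a b : ℝ)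
    (A : ℝ → Vec n →L[ℝ] Vec n) (B : ℝ → Vec k →L[ℝ] Vec n)
    (U : ℝ → Set (Vec k)) (E : Set (Vec n × Vec n))
    (L : ℝ → Vec n → Vec k → ℝ)
    (x : ℝ → Vec n) (u : ℝ → Vec k) : Prop :=
  AEStronglyMeasurable u (volume.restrict (Icc a b)) ∧
  (∀ᵐ t ∂(volume.restrict (Icc a b)), u t ∈ U t) ∧
  (∃ x' : ℝ → Vec n, IntegrableOn x' (Icc a b) ∧
    (∀ t ∈ Icc a b, x t = x a + ∫ s in a..t, x' s) ∧
    (∀ᵐ t ∂(volume.restrict (Icc a b)), x' t = A t (x t) + B t (u t))) ∧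
  (x a, x b) ∈ E ∧
  IntegrableOn (fun t => L t (x t) (u t)) (Icc a b)

/-- The cost of a process. -/
def costS {n k : ℕ} (a b : ℝ) (l : Vec n → Vec n → ℝ) (L : ℝ → Vec n → Vec k → ℝ)
    (x : ℝ → Vec n) (u : ℝ → Vec k) : ℝ :=
  l (x a) (x b) + ∫ t in a..b, L t (x t) (u t)

/-!
Write `q = x - x*` for a competing admissible process `(x, u)`. Condition (i) at
`(x t, u t)`, with the dynamics of both processes substituted, reads
`⟪ṗ, q⟫ + ⟪p, q̇⟫ ≤ L(t, x, u) - L(t, x*, u*)` a.e. The left side is the derivative of the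
absolutely continuous function `⟪p, q⟫`, so integrating gives
`⟪p b, q b⟫ - ⟪p a, q a⟫ ≤ ∫ L(t, x, u) - ∫ L(t, x*, u*)`, while (ii) gives
`l(x a, x b) - l(x* a, x* b) ≥ ⟪p a, q a⟫ - ⟪p b, q b⟫`. Adding the two inequalities
yields the claim. Integration by parts for `⟪p, q⟫` is reduced coordinatewise to the scalar
case, `AbsolutelyContinuousOnInterval.integral_deriv_mul_eq_sub`.
-/

theorem EuclideanSpace.real_inner_eq_sum_mul {ι : Type*} [Fintype ι] (x y : EuclideanSpace ℝ ι) :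
    ⟪x, y⟫_ℝ = ∑ i, x i * y i := by
  simp [PiLp.inner_apply, mul_comm]

theorem AbsolutelyContinuousOnInterval.congr {X : Type*} [PseudoMetricSpace X] {f g : ℝ → X}
    {a b : ℝ} (hf : AbsolutelyContinuousOnInterval f a b) (hfg : EqOn f g (uIcc a b)) :
    AbsolutelyContinuousOnInterval g a b := by
  refine hf.congr' ?_
  filter_upwards [mem_inf_of_right (mem_principal_self _)] with E hE
  refine Finset.sum_congr rfl fun i hi => ?_
  rw [hfg (hE.1 i hi).1, hfg (hE.1 i hi).2]

/-- `f` is absolutely continuous on `[a, b]` with a.e. derivative `f'`, in the form used by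
`AdmissibleS`. -/
def IsPrimitiveOn {E : Type*} [NormedAddCommGroup E] [NormedSpace ℝ E]
    (f f' : ℝ → E) (a b : ℝ) : Prop :=
  IntegrableOn f' (Icc a b) ∧ ∀ t ∈ Icc a b, f t = f a + ∫ s in a..t, f' s

namespace IsPrimitiveOn

variable {E F : Type*} [NormedAddCommGroup E] [NormedSpace ℝ E]
  [NormedAddCommGroup F] [NormedSpace ℝ F] {a b : ℝ}

theorem intervalIntegrable_deriv {f f' : ℝ → E} (hf : IsPrimitiveOn f f' a b) {t : ℝ}
    (ht : t ∈ Icc a b) : IntervalIntegrable f' volume a t :=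
  (hf.1.mono_set (by rw [uIcc_of_le ht.1]; exact Icc_subset_Icc_right ht.2)).intervalIntegrable

theorem sub {f f' g g' : ℝ → E} (hf : IsPrimitiveOn f f' a b) (hg : IsPrimitiveOn g g' a b) :
    IsPrimitiveOn (f - g) (f' - g') a b := by
  refine ⟨hf.1.sub hg.1, fun t ht => ?_⟩
  simp only [Pi.sub_apply]
  rw [hf.2 t ht, hg.2 t ht, intervalIntegral.integral_sub (hf.intervalIntegrable_deriv ht)
    (hg.intervalIntegrable_deriv ht)]
  abel

theorem map [CompleteSpace E] [CompleteSpace F] {f f' : ℝ → E} (hf : IsPrimitiveOn f f' a b)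
    (T : E →L[ℝ] F) : IsPrimitiveOn (fun t => T (f t)) (fun t => T (f' t)) a b := by
  refine ⟨T.integrable_comp hf.1, fun t ht => ?_⟩
  simp only [hf.2 t ht, T.intervalIntegral_comp_comm (hf.intervalIntegrable_deriv ht), map_add]

theorem continuousOn {f f' : ℝ → E} (hf : IsPrimitiveOn f f' a b) (hab : a ≤ b) :
    ContinuousOn f (Icc a b) := by
  have h := intervalIntegral.continuousOn_primitive_interval (a := a) (b := b) (μ := volume)
    (f := f') (by rw [uIcc_of_le hab]; exact hf.1)
  rw [uIcc_of_le hab] at h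
  exact (continuousOn_const.add h).congr hf.2

theorem ae_hasDerivAt [CompleteSpace E] {f f' : ℝ → E} (hf : IsPrimitiveOn f f' a b)
    (hab : a ≤ b) :
    ∀ᵐ t, t ∈ Ioo a b → HasDerivAt f (f' t) t := by
  have hint : IntervalIntegrable f' volume a b := hf.intervalIntegrable_deriv ⟨hab, le_rfl⟩
  filter_upwards [hint.ae_hasDerivAt_integral] with t ht hmem
  have hmem' : t ∈ uIcc a b := by rw [uIcc_of_le hab]; exact Ioo_subset_Icc_self hmem
  have hprim := (ht hmem' a left_mem_uIcc).const_add (f a)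
  refine hprim.congr_of_eventuallyEq ?_
  filter_upwards [Ioo_mem_nhds hmem.1 hmem.2] with s hs using hf.2 s (Ioo_subset_Icc_self hs)

theorem absolutelyContinuousOnInterval {f f' : ℝ → ℝ} (hf : IsPrimitiveOn f f' a b)
    (hab : a ≤ b) : AbsolutelyContinuousOnInterval f a b := by
  have hprim := (hf.intervalIntegrable_deriv ⟨hab, le_rfl⟩)
    |>.absolutelyContinuousOnInterval_intervalIntegral left_mem_uIcc
  refine ((LipschitzWith.const (f a)).lipschitzOnWith.absolutelyContinuousOnInterval.fun_add
    hprim).congr ?_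
  rw [uIcc_of_le hab]
  exact fun t ht => (hf.2 t ht).symm

theorem integral_deriv_mul_add_mul_deriv {f f' g g' : ℝ → ℝ} (hf : IsPrimitiveOn f f' a b)
    (hg : IsPrimitiveOn g g' a b) (hab : a ≤ b) :
    ∫ t in a..b, (f' t * g t + f t * g' t) = f b * g b - f a * g a := by
  rw [← hf.absolutelyContinuousOnInterval hab |>.integral_deriv_mul_eq_sub
    (hg.absolutelyContinuousOnInterval hab)]
  refine intervalIntegral.integral_congr_ae ?_
  filter_upwards [hf.ae_hasDerivAt hab, hg.ae_hasDerivAt hab, Measure.ae_ne volume b]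
    with t hf' hg' htb ht
  have ht' : t ∈ Ioo a b := by
    rw [uIoc_of_le hab] at ht
    exact ⟨ht.1, lt_of_le_of_ne ht.2 htb⟩
  rw [(hf' ht').deriv, (hg' ht').deriv]

theorem intervalIntegrable_deriv_mul_add_mul_deriv {f f' g g' : ℝ → ℝ}
    (hf : IsPrimitiveOn f f' a b) (hg : IsPrimitiveOn g g' a b) (hab : a ≤ b) :
    IntervalIntegrable (fun t => f' t * g t + f t * g' t) volume a b := by
  have hfc := hf.continuousOn hab
  have hgc := hg.continuousOn hab
  rw [← uIcc_of_le hab] at hfc hgc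
  exact ((hf.intervalIntegrable_deriv ⟨hab, le_rfl⟩).mul_continuousOn hgc).add
    ((hg.intervalIntegrable_deriv ⟨hab, le_rfl⟩).continuousOn_mul hfc)

variable {ι : Type*} [Fintype ι]

theorem intervalIntegrable_inner_deriv_add_inner_deriv {f f' g g' : ℝ → EuclideanSpace ℝ ι}
    (hf : IsPrimitiveOn f f' a b) (hg : IsPrimitiveOn g g' a b) (hab : a ≤ b) :
    IntervalIntegrable (fun t => ⟪f' t, g t⟫_ℝ + ⟪f t, g' t⟫_ℝ) volume a b := by
  simp_rw [EuclideanSpace.real_inner_eq_sum_mul, ← Finset.sum_add_distrib, ← Finset.sum_fn]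
  exact IntervalIntegrable.sum _ fun i _ =>
    (hf.map (EuclideanSpace.proj i)).intervalIntegrable_deriv_mul_add_mul_deriv
      (hg.map (EuclideanSpace.proj i)) hab

theorem integral_inner_deriv_add_inner_deriv {f f' g g' : ℝ → EuclideanSpace ℝ ι}
    (hf : IsPrimitiveOn f f' a b) (hg : IsPrimitiveOn g g' a b) (hab : a ≤ b) :
    ∫ t in a..b, (⟪f' t, g t⟫_ℝ + ⟪f t, g' t⟫_ℝ) = ⟪f b, g b⟫_ℝ - ⟪f a, g a⟫_ℝ := by
  have hfi (i : ι) := hf.map (EuclideanSpace.proj i)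
  have hgi (i : ι) := hg.map (EuclideanSpace.proj i)
  calc ∫ t in a..b, (⟪f' t, g t⟫_ℝ + ⟪f t, g' t⟫_ℝ)
      = ∑ i, ∫ t in a..b, (f' t i * g t i + f t i * g' t i) := by
        simp_rw [EuclideanSpace.real_inner_eq_sum_mul, ← Finset.sum_add_distrib]
        exact intervalIntegral.integral_finsetSum fun i _ =>
          (hfi i).intervalIntegrable_deriv_mul_add_mul_deriv (hgi i) hab
    _ = ∑ i, (f b i * g b i - f a i * g a i) :=
        Finset.sum_congr rfl fun i _ => (hfi i).integral_deriv_mul_add_mul_deriv (hgi i) hab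
    _ = ⟪f b, g b⟫_ℝ - ⟪f a, g a⟫_ℝ := by
        simp_rw [EuclideanSpace.real_inner_eq_sum_mul, Finset.sum_sub_distrib]

theorem inner_sub_inner_le_integral {p p' q q' : ℝ → EuclideanSpace ℝ ι} {h : ℝ → ℝ}
    (hp : IsPrimitiveOn p p' a b) (hq : IsPrimitiveOn q q' a b) (hab : a ≤ b)
    (hh : IntervalIntegrable h volume a b)
    (hle : ∀ᵐ t ∂volume.restrict (Icc a b), ⟪p' t, q t⟫_ℝ + ⟪p t, q' t⟫_ℝ ≤ h t) :
    ⟪p b, q b⟫_ℝ - ⟪p a, q a⟫_ℝ ≤ ∫ t in a..b, h t := by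
  rw [← hp.integral_inner_deriv_add_inner_deriv hq hab]
  exact intervalIntegral.integral_mono_ae_restrict hab
    (hp.intervalIntegrable_inner_deriv_add_inner_deriv hq hab) hh hle

end IsPrimitiveOn

theorem sufficiency_linear_convex_no_state_constraint_general
    {n k : ℕ} (a b : ℝ) (hab : a < b)
    (A : ℝ → Vec n →L[ℝ] Vec n) (B : ℝ → Vec k →L[ℝ] Vec n)
    (U : ℝ → Set (Vec k)) (E : Set (Vec n × Vec n))
    (l : Vec n → Vec n → ℝ) (L : ℝ → Vec n → Vec k → ℝ)
    (xs : ℝ → Vec n) (us : ℝ → Vec k)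
    (hadm : AdmissibleS a b A B U E L xs us)
    (p p' : ℝ → Vec n)
    (hp'int : IntegrableOn p' (Icc a b))
    (hpAC : ∀ t ∈ Icc a b, p t = p a + ∫ s in a..t, p' s)
    (hi : ∀ᵐ t ∂(volume.restrict (Icc a b)), ∀ x : Vec n, ∀ u ∈ U t,
      ⟪p t, A t x + B t u⟫_ℝ - L t x u ≤
        ⟪p t, A t (xs t) + B t (us t)⟫_ℝ - L t (xs t) (us t) + ⟪-p' t, x - xs t⟫_ℝ)
    (hii : ∀ xa xb, (xa, xb) ∈ E →
      l xa xb - l (xs a) (xs b) ≥ ⟪p a, xa - xs a⟫_ℝ - ⟪p b, xb - xs b⟫_ℝ) :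
    ∀ x u, AdmissibleS a b A B U E L x u →
      costS a b l L xs us ≤ costS a b l L x u := by
  rintro x u ⟨-, huU, ⟨x', hxint, hxprim, hxdyn⟩, hxE, hLx⟩
  obtain ⟨-, -, ⟨xs', hxsint, hxsprim, hxsdyn⟩, -, hLxs⟩ := hadm
  have hpointwise : ∀ᵐ t ∂volume.restrict (Icc a b),
      ⟪p' t, (x - xs) t⟫_ℝ + ⟪p t, (x' - xs') t⟫_ℝ ≤ L t (x t) (u t) - L t (xs t) (us t) := by
    filter_upwards [hi, huU, hxdyn, hxsdyn] with t hit hut hx hxs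
    have := hit (x t) (u t) hut
    rw [← hx, ← hxs, inner_neg_left] at this
    simp only [Pi.sub_apply, inner_sub_right] at this ⊢
    linarith
  have hLxi := (intervalIntegrable_iff_integrableOn_Icc_of_le hab.le).2 hLx
  have hLxsi := (intervalIntegrable_iff_integrableOn_Icc_of_le hab.le).2 hLxs
  have hrunning := IsPrimitiveOn.inner_sub_inner_le_integral
    (h := fun t => L t (x t) (u t) - L t (xs t) (us t)) ⟨hp'int, hpAC⟩
    (IsPrimitiveOn.sub ⟨hxint, hxprim⟩ ⟨hxsint, hxsprim⟩) hab.le (hLxi.sub hLxsi) hpointwise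
  rw [intervalIntegral.integral_sub hLxi hLxsi] at hrunning
  have hendpoint := hii _ _ hxE
  simp only [costS, Pi.sub_apply] at hrunning ⊢
  linarith

/-- for the linear-convex problem without state constraints, the existence of
an absolutely continuous `p` satisfying the normal (λ₀ = 1) extremality conditions
(i) (joint maximization/subgradient inequality) and (ii) (transversality subgradient
inequality) is sufficient for `(x*,u*)` to be a global minimizer among admissible
processes. -/
theorem sufficiency_linear_convex_no_state_constraint
    {n k : ℕ} (a b : ℝ) (hab : a < b)
    (A : ℝ → Vec n →L[ℝ] Vec n) (B : ℝ → Vec k →L[ℝ] Vec n)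
    (U : ℝ → Set (Vec k)) (E : Set (Vec n × Vec n))
    (l : Vec n → Vec n → ℝ) (L : ℝ → Vec n → Vec k → ℝ)
    (hA : IntegrableOn A (Icc a b))
    (hB : AEStronglyMeasurable B (volume.restrict (Icc a b)))
    (hBbdd : ∃ M : ℝ, ∀ᵐ t ∂(volume.restrict (Icc a b)), ‖B t‖ ≤ M)
    (hEclosed : IsClosed E) (hEconv : Convex ℝ E)
    (hUconv : ∀ t, Convex ℝ (U t))
    (hlconv : ConvexOn ℝ univ (fun q : Vec n × Vec n => l q.1 q.2))
    (hLconv : ∀ t, ConvexOn ℝ univ (fun q : Vec n × Vec k => L t q.1 q.2))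
    (xs : ℝ → Vec n) (us : ℝ → Vec k)
    (hadm : AdmissibleS a b A B U E L xs us)
    (p p' : ℝ → Vec n)
    (hp'int : IntegrableOn p' (Icc a b))
    (hpAC : ∀ t ∈ Icc a b, p t = p a + ∫ s in a..t, p' s)
    (hi : ∀ᵐ t ∂(volume.restrict (Icc a b)), ∀ x : Vec n, ∀ u ∈ U t,
      ⟪p t, A t x + B t u⟫_ℝ - L t x u ≤
        ⟪p t, A t (xs t) + B t (us t)⟫_ℝ - L t (xs t) (us t) + ⟪-p' t, x - xs t⟫_ℝ)
    (hii : ∀ xa xb, (xa, xb) ∈ E →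
      l xa xb - l (xs a) (xs b) ≥ ⟪p a, xa - xs a⟫_ℝ - ⟪p b, xb - xs b⟫_ℝ) :
    ∀ x u, AdmissibleS a b A B U E L x u →
      costS a b l L xs us ≤ costS a b l L x u :=
  sufficiency_linear_convex_no_state_constraint_general a b hab A B U E l L xs us hadm p p' hp'int
    hpAC hi hii
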